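/- Let T be an inverse semigroup, I a set, and p : I × I → T a partial McAlister function. Then the inverse Rees matrix semigroup IM(T, I, p) is an inverse semigroup, with multiplication [j₂,t₂,i₂][j₁,t₁,i₁] = [j₂, t₂ p_{i₂,j₁} t₁, i₁] and generalized inverse [j,t,i]* = [i,t*,j]. -/
import Mathlib


/-- An inverse semigroup: a semigroup in which every element has a unique
generalized inverse `star s`. -/
class InverseSemigroup (S : Type*) extends Semigroup S where
  star : S → S
  mul_star_mul : ∀ s : S, s * star s * s = s
  star_mul_star : ∀ s : S, star s * s * star s = star s
  star_unique : ∀ s t : S, s * t * s = s → t * s * t = t → t = star s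

postfix:max "⋆" => InverseSemigroup.star

/-- The natural partial order on an inverse semigroup: `s ≤ t` iff `s = t s⋆ s`. -/
def isLE {T : Type*} [InverseSemigroup T] (s t : T) : Prop := s = t * s⋆ * s

/-- A partial McAlister function `p : I × I → T`. -/
structure IsPartialMcAlister {T : Type*} [InverseSemigroup T] {I : Type*}
    (p : I → I → T) : Prop where
  idem : ∀ i : I, p i i * p i i = p i i
  absorb : ∀ i j : I, p i i * p i j * p j j = p i j
  star_eq : ∀ i j : I, (p i j)⋆ = p j i
  le : ∀ i j k : I, isLE (p i j * p j k) (p i k)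

variable {T : Type*} [InverseSemigroup T] {I : Type*}

/-- Membership in the regular Rees matrix semigroup `RM(T,I,p)`:
a triple `(j, t, i)` with `p_{j,j} t p_{i,i} = t`. -/
def inRM (p : I → I → T) (x : I × T × I) : Prop :=
  p x.1 x.1 * x.2.1 * p x.2.2 x.2.2 = x.2.1

/-- The Rees matrix multiplication `(j₂,t₂,i₂)(j₁,t₁,i₁) = (j₂, t₂ p_{i₂,j₁} t₁, i₁)`. -/
def rmMul (p : I → I → T) (y x : I × T × I) : I × T × I :=
  (y.1, y.2.1 * p y.2.2 x.1 * x.2.1, x.2.2)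

/-- The candidate generalized inverse `(j,t,i)* = (i, t⋆, j)`. -/
def rmStar (x : I × T × I) : I × T × I :=
  (x.2.2, x.2.1⋆, x.1)

/-- The congruence `γ` defining `IM(T,I,p) = RM(T,I,p)/γ`. -/
def gammaRel (p : I → I → T) (x y : I × T × I) : Prop :=
  p x.1 y.1 * y.2.1 * p y.2.2 x.2.2 = x.2.1 ∧
  p y.1 x.1 * x.2.1 * p x.2.2 y.2.2 = y.2.1


namespace IMProof

open InverseSemigroup

variable {T : Type*} [InverseSemigroup T]

lemma mss (s : T) : s * s⋆ * s = s := mul_star_mul s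
lemma sms (s : T) : s⋆ * s * s⋆ = s⋆ := star_mul_star s

lemma sstar (s : T) : s⋆⋆ = s := (star_unique s⋆ s (sms s) (mss s)).symm

lemma star_of_idem {e : T} (he : e * e = e) : e⋆ = e := by
  have h : e * e * e = e := by rw [he, he]
  exact (star_unique e e h h).symm

lemma idem_ss (s : T) : (s⋆ * s) * (s⋆ * s) = s⋆ * s := by
  calc (s⋆ * s) * (s⋆ * s) = (s⋆ * s * s⋆) * s := by simp only [mul_assoc]
    _ = s⋆ * s := by rw [sms]

lemma idem_sstar (s : T) : (s * s⋆) * (s * s⋆) = s * s⋆ := by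
  calc (s * s⋆) * (s * s⋆) = (s * s⋆ * s) * s⋆ := by simp only [mul_assoc]
    _ = s * s⋆ := by rw [mss]

lemma mul_idem {e f : T} (he : e * e = e) (hf : f * f = f) :
    (e * f) * (e * f) = e * f := by
  have h2 : (e*f)⋆ * (e*f) * (e*f)⋆ = (e*f)⋆ := sms _
  have hinv1 : (e*f) * (f*(e*f)⋆*e) * (e*f) = e*f := by
    calc (e*f) * (f*(e*f)⋆*e) * (e*f)
        = e * (f*f) * (e*f)⋆ * (e*e) * f := by simp only [mul_assoc]
      _ = (e*f) * (e*f)⋆ * (e*f) := by rw [he, hf] <;> simp only [mul_assoc]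
      _ = e*f := mss _
  have hinv2 : (f*(e*f)⋆*e) * (e*f) * (f*(e*f)⋆*e) = f*(e*f)⋆*e := by
    calc (f*(e*f)⋆*e) * (e*f) * (f*(e*f)⋆*e)
        = f * ((e*f)⋆ * ((e*e) * (f*f)) * (e*f)⋆) * e := by simp only [mul_assoc]
      _ = f * ((e*f)⋆ * (e*f) * (e*f)⋆) * e := by rw [he, hf] <;> simp only [mul_assoc]
      _ = f*(e*f)⋆*e := by rw [h2]
  have hg : f*(e*f)⋆*e = (e*f)⋆ := star_unique (e*f) _ hinv1 hinv2
  have hgi : (f*(e*f)⋆*e) * (f*(e*f)⋆*e) = f*(e*f)⋆*e := by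
    calc (f*(e*f)⋆*e) * (f*(e*f)⋆*e)
        = f * ((e*f)⋆ * (e*f) * (e*f)⋆) * e := by simp only [mul_assoc]
      _ = f*(e*f)⋆*e := by rw [h2]
  have haa : (e*f)⋆ * (e*f)⋆ = (e*f)⋆ := by rw [← hg]; exact hgi
  have hef : e*f = (e*f)⋆ := by
    conv_lhs => rw [← sstar (e*f)]
    rw [star_of_idem haa]
  conv_lhs => rw [hef, haa, ← hef]

lemma idem_comm {e f : T} (he : e * e = e) (hf : f * f = f) : e * f = f * e := by
  have hef := mul_idem he hf
  have hfe := mul_idem hf he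
  have h1 : (e*f)*(f*e)*(e*f) = e*f := by
    calc (e*f)*(f*e)*(e*f) = e*((f*f)*(e*e))*f := by simp only [mul_assoc]
      _ = (e*f)*(e*f) := by rw [he, hf] <;> simp only [mul_assoc]
      _ = e*f := hef
  have h2 : (f*e)*(e*f)*(f*e) = f*e := by
    calc (f*e)*(e*f)*(f*e) = f*((e*e)*(f*f))*e := by simp only [mul_assoc]
      _ = (f*e)*(f*e) := by rw [he, hf] <;> simp only [mul_assoc]
      _ = f*e := hfe
  have h3 : f*e = (e*f)⋆ := star_unique (e*f) (f*e) h1 h2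
  rw [h3, star_of_idem hef]

lemma star_mul' (s t : T) : (s * t)⋆ = t⋆ * s⋆ := by
  have comm := idem_comm (idem_sstar t) (idem_ss s)
  have comm2 := idem_comm (idem_ss s) (idem_sstar t)
  have h1 : (s*t)*(t⋆*s⋆)*(s*t) = s*t := by
    calc (s*t)*(t⋆*s⋆)*(s*t) = s*((t*t⋆)*(s⋆*s))*t := by simp only [mul_assoc]
      _ = s*((s⋆*s)*(t*t⋆))*t := by rw [comm]
      _ = (s*s⋆*s)*(t*t⋆*t) := by simp only [mul_assoc]
      _ = s*t := by rw [mss, mss]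
  have h2 : (t⋆*s⋆)*(s*t)*(t⋆*s⋆) = t⋆*s⋆ := by
    calc (t⋆*s⋆)*(s*t)*(t⋆*s⋆) = t⋆*((s⋆*s)*(t*t⋆))*s⋆ := by simp only [mul_assoc]
      _ = t⋆*((t*t⋆)*(s⋆*s))*s⋆ := by rw [comm2]
      _ = (t⋆*t*t⋆)*(s⋆*s*s⋆) := by simp only [mul_assoc]
      _ = t⋆*s⋆ := by rw [sms, sms]
  exact (star_unique (s*t) (t⋆*s⋆) h1 h2).symm

/- conjugation lemmas -/
lemma conj_abs (u : T) {e : T} (he : e * e = e) : (u*e*u⋆)*u = u*e := by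
  calc (u*e*u⋆)*u = u*(e*(u⋆*u)) := by simp only [mul_assoc]
    _ = u*((u⋆*u)*e) := by rw [idem_comm he (idem_ss u)]
    _ = (u*u⋆*u)*e := by simp only [mul_assoc]
    _ = u*e := by rw [mss]

lemma conj_abs' (u : T) {e : T} (he : e * e = e) : u*(u⋆*e*u) = e*u := by
  calc u*(u⋆*e*u) = ((u*u⋆)*e)*u := by simp only [mul_assoc]
    _ = (e*(u*u⋆))*u := by rw [idem_comm (idem_sstar u) he]
    _ = e*(u*u⋆*u) := by simp only [mul_assoc]
    _ = e*u := by rw [mss]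

lemma conj_idem (u : T) {e : T} (he : e * e = e) :
    (u*e*u⋆)*(u*e*u⋆) = u*e*u⋆ := by
  calc (u*e*u⋆)*(u*e*u⋆) = ((u*e*u⋆)*u)*(e*u⋆) := by simp only [mul_assoc]
    _ = (u*e)*(e*u⋆) := by rw [conj_abs u he]
    _ = u*((e*e)*u⋆) := by simp only [mul_assoc]
    _ = u*(e*u⋆) := by rw [he]
    _ = u*e*u⋆ := by simp only [mul_assoc]

lemma conj_idem' (u : T) {e : T} (he : e * e = e) :
    (u⋆*e*u)*(u⋆*e*u) = u⋆*e*u := by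
  have h := conj_idem u⋆ he
  rwa [sstar] at h

/- order lemmas -/
lemma isLE_of_right {s t e : T} (he : e * e = e) (h : s = t * e) : isLE s t := by
  have hstar : s⋆ = e * t⋆ := by rw [h, star_mul', star_of_idem he]
  have comm := idem_comm (idem_ss t) he
  show s = t * s⋆ * s
  rw [hstar, h]
  symm
  calc t*(e*t⋆)*(t*e) = t*(e*((t⋆*t)*e)) := by simp only [mul_assoc]
    _ = t*(e*(e*(t⋆*t))) := by rw [comm]
    _ = t*((e*e)*(t⋆*t)) := by simp only [mul_assoc]
    _ = t*(e*(t⋆*t)) := by rw [he]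
    _ = t*((t⋆*t)*e) := by rw [← comm]
    _ = (t*t⋆*t)*e := by simp only [mul_assoc]
    _ = t*e := by rw [mss]

lemma isLE_of_left {s t e : T} (he : e * e = e) (h : s = e * t) : isLE s t := by
  have hstar : s⋆ = t⋆ * e := by rw [h, star_mul', star_of_idem he]
  have comm := idem_comm (idem_sstar t) he
  show s = t * s⋆ * s
  rw [hstar, h]
  symm
  calc t*(t⋆*e)*(e*t) = (t*t⋆)*((e*e)*t) := by simp only [mul_assoc]
    _ = (t*t⋆)*(e*t) := by rw [he]
    _ = ((t*t⋆)*e)*t := by simp only [mul_assoc]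
    _ = (e*(t*t⋆))*t := by rw [comm]
    _ = e*(t*t⋆*t) := by simp only [mul_assoc]
    _ = e*t := by rw [mss]

lemma le_left {s t : T} (h : isLE s t) : s = (s*s⋆)*t := by
  have h' : s = t * s⋆ * s := h
  have hstar : s⋆ = s⋆*(s*t⋆) := by
    conv_lhs => rw [h']
    rw [star_mul', star_mul', sstar]
  have h2 : s*s⋆ = s*t⋆ := by
    conv_lhs => rw [hstar]
    calc s*(s⋆*(s*t⋆)) = (s*s⋆*s)*t⋆ := by simp only [mul_assoc]
      _ = s*t⋆ := by rw [mss]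
  have comm := idem_comm (idem_ss s) (idem_ss t)
  symm
  calc (s*s⋆)*t = (s*t⋆)*t := by rw [h2]
    _ = ((t*s⋆*s)*t⋆)*t := by rw [← h']
    _ = t*((s⋆*s)*(t⋆*t)) := by simp only [mul_assoc]
    _ = t*((t⋆*t)*(s⋆*s)) := by rw [comm]
    _ = (t*t⋆*t)*(s⋆*s) := by simp only [mul_assoc]
    _ = t*(s⋆*s) := by rw [mss]
    _ = s := by rw [← mul_assoc, ← h']

lemma le_trans' {s t u : T} (h1 : isLE s t) (h2 : isLE t u) : isLE s u := by
  have h1' : s = t * s⋆ * s := h1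
  have h : s = u * ((t⋆*t)*(s⋆*s)) := by
    calc s = t*s⋆*s := h1'
      _ = (u*t⋆*t)*s⋆*s := by rw [← (h2 : t = u * t⋆ * t)]
      _ = u*((t⋆*t)*(s⋆*s)) := by simp only [mul_assoc]
  exact isLE_of_right (mul_idem (idem_ss t) (idem_ss s)) h

lemma le_antisymm' {s t : T} (h1 : isLE s t) (h2 : isLE t s) : s = t := by
  have h1' : s = t * s⋆ * s := h1
  have h2' : t = s * t⋆ * t := h2
  symm
  calc t = s*t⋆*t := h2'
    _ = (t*s⋆*s)*t⋆*t := by rw [← h1']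
    _ = t*((s⋆*s)*(t⋆*t)) := by simp only [mul_assoc]
    _ = t*((t⋆*t)*(s⋆*s)) := by rw [idem_comm (idem_ss s) (idem_ss t)]
    _ = (t*t⋆*t)*(s⋆*s) := by simp only [mul_assoc]
    _ = t*(s⋆*s) := by rw [mss]
    _ = s := by rw [← mul_assoc, ← h1']

lemma le_mul_left (u : T) {s t : T} (h : isLE s t) : isLE (u*s) (u*t) := by
  have hl := le_left h
  apply isLE_of_left (conj_idem u (idem_sstar s))
  calc u*s = u*((s*s⋆)*t) := by rw [← hl]
    _ = (u*(s*s⋆))*t := by simp only [mul_assoc]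
    _ = ((u*(s*s⋆)*u⋆)*u)*t := by rw [conj_abs u (idem_sstar s)]
    _ = (u*(s*s⋆)*u⋆)*(u*t) := by simp only [mul_assoc]

lemma le_mul_right (u : T) {s t : T} (h : isLE s t) : isLE (s*u) (t*u) := by
  have h' : s = t * s⋆ * s := h
  apply isLE_of_right (conj_idem' u (idem_ss s))
  calc s*u = (t*s⋆*s)*u := by rw [← h']
    _ = t*((s⋆*s)*u) := by simp only [mul_assoc]
    _ = t*(u*(u⋆*(s⋆*s)*u)) := by rw [conj_abs' u (idem_ss s)]
    _ = (t*u)*(u⋆*(s⋆*s)*u) := by simp only [mul_assoc]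

lemma le_sandwich {a b c d : T} (h1 : isLE a b) (h2 : isLE c d) (u : T) :
    isLE (a*u*c) (b*u*d) :=
  le_trans' (le_mul_right c (le_mul_right u h1)) (le_mul_left (b*u) h2)

end IMProof

namespace IMProof

open InverseSemigroup

variable {T : Type*} [InverseSemigroup T] {I : Type*} {p : I → I → T}

lemma abs_cstarc (u c : T) : (u*c)*(c⋆*c) = u*c := by
  calc (u*c)*(c⋆*c) = u*(c*c⋆*c) := by simp only [mul_assoc]
    _ = u*c := by rw [mss]

lemma aastar_abs2 (a u v : T) : a * a⋆ * (a * u * v) = a * u * v := by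
  calc a * a⋆ * (a * u * v) = (a * a⋆ * a) * (u * v) := by simp only [mul_assoc]
    _ = a * (u*v) := by rw [mss]
    _ = a*u*v := by simp only [mul_assoc]

lemma p_abs_left (hp : IsPartialMcAlister p) (i j : I) : p i i * p i j = p i j := by
  calc p i i * p i j = p i i * (p i i * p i j * p j j) := by rw [hp.absorb]
    _ = (p i i * p i i) * p i j * p j j := by simp only [mul_assoc]
    _ = p i i * p i j * p j j := by rw [hp.idem]
    _ = p i j := hp.absorb i j

lemma p_abs_right (hp : IsPartialMcAlister p) (i j : I) : p i j * p j j = p i j := by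
  calc p i j * p j j = (p i i * p i j * p j j) * p j j := by rw [hp.absorb]
    _ = p i i * p i j * (p j j * p j j) := by simp only [mul_assoc]
    _ = p i i * p i j * p j j := by rw [hp.idem]
    _ = p i j := hp.absorb i j

lemma inRM_left (hp : IsPartialMcAlister p) {x : I × T × I} (hx : inRM p x) :
    p x.1 x.1 * x.2.1 = x.2.1 := by
  have hx' : p x.1 x.1 * x.2.1 * p x.2.2 x.2.2 = x.2.1 := hx
  calc p x.1 x.1 * x.2.1
      = p x.1 x.1 * (p x.1 x.1 * x.2.1 * p x.2.2 x.2.2) := by rw [hx']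
    _ = (p x.1 x.1 * p x.1 x.1) * x.2.1 * p x.2.2 x.2.2 := by simp only [mul_assoc]
    _ = p x.1 x.1 * x.2.1 * p x.2.2 x.2.2 := by rw [hp.idem]
    _ = x.2.1 := hx'

lemma inRM_right (hp : IsPartialMcAlister p) {x : I × T × I} (hx : inRM p x) :
    x.2.1 * p x.2.2 x.2.2 = x.2.1 := by
  have hx' : p x.1 x.1 * x.2.1 * p x.2.2 x.2.2 = x.2.1 := hx
  calc x.2.1 * p x.2.2 x.2.2
      = (p x.1 x.1 * x.2.1 * p x.2.2 x.2.2) * p x.2.2 x.2.2 := by rw [hx']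
    _ = p x.1 x.1 * x.2.1 * (p x.2.2 x.2.2 * p x.2.2 x.2.2) := by simp only [mul_assoc]
    _ = p x.1 x.1 * x.2.1 * p x.2.2 x.2.2 := by rw [hp.idem]
    _ = x.2.1 := hx'

lemma le_chain3 (hp : IsPartialMcAlister p) (a b c d : I) :
    isLE (p a b * p b c * p c d) (p a d) :=
  le_trans' (le_mul_right (p c d) (hp.le a b c)) (hp.le a c d)

lemma gamma_symm {x y : I × T × I} (h : gammaRel p x y) : gammaRel p y x :=
  ⟨h.2, h.1⟩

lemma gamma_abs_left (hp : IsPartialMcAlister p) {x y : I × T × I}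
    (h : gammaRel p x y) : p x.1 y.1 * p y.1 x.1 * x.2.1 = x.2.1 := by
  conv_lhs => rw [← h.1]
  conv_rhs => rw [← h.1]
  rw [← hp.star_eq x.1 y.1]
  exact aastar_abs2 _ _ _

lemma gamma_abs_right (hp : IsPartialMcAlister p) {x y : I × T × I}
    (h : gammaRel p x y) : x.2.1 * (p x.2.2 y.2.2 * p y.2.2 x.2.2) = x.2.1 := by
  conv_lhs => rw [← h.1]
  conv_rhs => rw [← h.1]
  rw [← hp.star_eq y.2.2 x.2.2]
  exact abs_cstarc _ _

lemma trans_key (hp : IsPartialMcAlister p) {x y z : I × T × I}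
    (h1 : gammaRel p x y) (h2 : gammaRel p y z) :
    p x.1 z.1 * z.2.1 * p z.2.2 x.2.2 = x.2.1 := by
  apply le_antisymm'
  · have e1 : p x.1 z.1 * z.2.1 * p z.2.2 x.2.2
        = (p x.1 z.1 * p z.1 y.1) * y.2.1 * (p y.2.2 z.2.2 * p z.2.2 x.2.2) := by
      conv_lhs => rw [← h2.2]
      simp only [mul_assoc]
    rw [e1, ← h1.1]
    exact le_sandwich (hp.le x.1 z.1 y.1) (hp.le y.2.2 z.2.2 x.2.2) y.2.1
  · have e2 : x.2.1
        = (p x.1 y.1 * p y.1 z.1) * z.2.1 * (p z.2.2 y.2.2 * p y.2.2 x.2.2) := by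
      conv_lhs => rw [← h1.1, ← h2.1]
      simp only [mul_assoc]
    rw [e2]
    exact le_sandwich (hp.le x.1 y.1 z.1) (hp.le z.2.2 y.2.2 x.2.2) z.2.1

lemma compat_key (hp : IsPartialMcAlister p) {x x' y y' : I × T × I}
    (hx : gammaRel p x x') (hy : gammaRel p y y') :
    p y.1 y'.1 * (y'.2.1 * p y'.2.2 x'.1 * x'.2.1) * p x'.2.2 x.2.2
      = y.2.1 * p y.2.2 x.1 * x.2.1 := by
  apply le_antisymm'
  · have hL : p y.1 y'.1 * (y'.2.1 * p y'.2.2 x'.1 * x'.2.1) * p x'.2.2 x.2.2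
        = y.2.1 * (p y.2.2 y'.2.2 * p y'.2.2 x'.1 * p x'.1 x.1) * x.2.1 := by
      conv_rhs => rw [← gamma_abs_left hp hy, ← gamma_abs_right hp hx]
      conv_lhs => rw [← hy.2, ← hx.2]
      simp only [mul_assoc]
    rw [hL]
    exact le_mul_right x.2.1 (le_mul_left y.2.1 (le_chain3 hp _ _ _ _))
  · have hR : y.2.1 * p y.2.2 x.1 * x.2.1
        = (p y.1 y'.1 * y'.2.1) * (p y'.2.2 y.2.2 * p y.2.2 x.1 * p x.1 x'.1)
          * (x'.2.1 * p x'.2.2 x.2.2) := by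
      conv_lhs => rw [← hy.1, ← hx.1]
      simp only [mul_assoc]
    have hL2 : p y.1 y'.1 * (y'.2.1 * p y'.2.2 x'.1 * x'.2.1) * p x'.2.2 x.2.2
        = (p y.1 y'.1 * y'.2.1) * (p y'.2.2 x'.1) * (x'.2.1 * p x'.2.2 x.2.2) := by
      simp only [mul_assoc]
    rw [hR, hL2]
    exact le_mul_right _ (le_mul_left _ (le_chain3 hp _ _ _ _))

end IMProof

open IMProof InverseSemigroup

/-- `IM(T,I,p)` is an inverse semigroup: `γ` is an equivalence relation on
`RM(T,I,p)` compatible with the (associative) multiplication, the induced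
multiplication on the quotient is regular with `[j,t,i]⋆ = [i,t⋆,j]`, and
generalized inverses are unique in the quotient. -/
theorem stmt18 (p : I → I → T) (hp : IsPartialMcAlister p) :
    -- closure of RM under multiplication and star
    (∀ x y, inRM p x → inRM p y → inRM p (rmMul p y x)) ∧
    (∀ x, inRM p x → inRM p (rmStar x)) ∧
    -- associativity of the multiplication
    (∀ x y z : I × T × I, rmMul p (rmMul p z y) x = rmMul p z (rmMul p y x)) ∧
    -- γ is an equivalence relation on RM
    (∀ x, inRM p x → gammaRel p x x) ∧
    (∀ x y, gammaRel p x y → gammaRel p y x) ∧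
    (∀ x y z, inRM p x → inRM p y → inRM p z →
      gammaRel p x y → gammaRel p y z → gammaRel p x z) ∧
    -- the multiplication descends to the quotient
    (∀ x x' y y', inRM p x → inRM p x' → inRM p y → inRM p y' →
      gammaRel p x x' → gammaRel p y y' →
      gammaRel p (rmMul p y x) (rmMul p y' x')) ∧
    -- [i,t⋆,j] is a generalized inverse of [j,t,i] in the quotient
    (∀ x, inRM p x →
      gammaRel p (rmMul p (rmMul p x (rmStar x)) x) x ∧
      gammaRel p (rmMul p (rmMul p (rmStar x) x) (rmStar x)) (rmStar x)) ∧
    -- uniqueness of generalized inverses in the quotient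
    (∀ x y, inRM p x → inRM p y →
      gammaRel p (rmMul p (rmMul p x y) x) x →
      gammaRel p (rmMul p (rmMul p y x) y) y →
      gammaRel p y (rmStar x)) := by
  -- star-closure, proved first since used later
  have starClosed : ∀ x, inRM p x → inRM p (rmStar x) := by
    intro x hx
    have hx' : p x.1 x.1 * x.2.1 * p x.2.2 x.2.2 = x.2.1 := hx
    have h := congrArg InverseSemigroup.star hx'
    rw [IMProof.star_mul', IMProof.star_mul', hp.star_eq x.2.2 x.2.2, hp.star_eq x.1 x.1] at h
    show p x.2.2 x.2.2 * x.2.1⋆ * p x.1 x.1 = x.2.1⋆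
    rw [mul_assoc]
    exact h
  refine ⟨?_, starClosed, ?_, ?_, ?_, ?_, ?_, ?_, ?_⟩
  · -- closure under multiplication
    intro x y hx hy
    show p y.1 y.1 * (y.2.1 * p y.2.2 x.1 * x.2.1) * p x.2.2 x.2.2
        = y.2.1 * p y.2.2 x.1 * x.2.1
    calc p y.1 y.1 * (y.2.1 * p y.2.2 x.1 * x.2.1) * p x.2.2 x.2.2
        = (p y.1 y.1 * y.2.1) * p y.2.2 x.1 * (x.2.1 * p x.2.2 x.2.2) := by
          simp only [mul_assoc]
      _ = y.2.1 * p y.2.2 x.1 * x.2.1 := by rw [inRM_left hp hy, inRM_right hp hx]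
  · -- associativity
    intro x y z
    simp only [rmMul, mul_assoc]
  · -- reflexivity
    intro x hx
    exact ⟨hx, hx⟩
  · -- symmetry
    intro x y h
    exact ⟨h.2, h.1⟩
  · -- transitivity
    intro x y z _ _ _ hxy hyz
    exact ⟨trans_key hp hxy hyz, trans_key hp (gamma_symm hyz) (gamma_symm hxy)⟩
  · -- compatibility
    intro x x' y y' _ _ _ _ hxx' hyy'
    exact ⟨compat_key hp hxx' hyy', compat_key hp (gamma_symm hxx') (gamma_symm hyy')⟩
  · -- generalized inverse laws
    intro x hx
    have h2 : p x.1 x.1 * x.2.1 = x.2.1 := inRM_left hp hx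
    have h3 : x.2.1 * p x.2.2 x.2.2 = x.2.1 := inRM_right hp hx
    have h4 : x.2.1⋆ * p x.1 x.1 = x.2.1⋆ := by
      have h := congrArg InverseSemigroup.star h2
      rwa [IMProof.star_mul', hp.star_eq x.1 x.1] at h
    constructor
    · have e1 : rmMul p (rmMul p x (rmStar x)) x = x := by
        show ((x.1 : I), x.2.1 * p x.2.2 x.2.2 * x.2.1⋆ * p x.1 x.1 * x.2.1, x.2.2) = x
        rw [h3]
        have key : x.2.1 * x.2.1⋆ * p x.1 x.1 * x.2.1 = x.2.1 := by
          calc x.2.1 * x.2.1⋆ * p x.1 x.1 * x.2.1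
              = x.2.1 * (x.2.1⋆ * p x.1 x.1) * x.2.1 := by simp only [mul_assoc]
            _ = x.2.1 * x.2.1⋆ * x.2.1 := by rw [h4]
            _ = x.2.1 := mss _
        rw [key]
      rw [e1]
      exact ⟨hx, hx⟩
    · have e2 : rmMul p (rmMul p (rmStar x) x) (rmStar x) = rmStar x := by
        show ((x.2.2 : I), x.2.1⋆ * p x.1 x.1 * x.2.1 * p x.2.2 x.2.2 * x.2.1⋆, x.1)
            = rmStar x
        rw [h4]
        have key : x.2.1⋆ * x.2.1 * p x.2.2 x.2.2 * x.2.1⋆ = x.2.1⋆ := by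
          calc x.2.1⋆ * x.2.1 * p x.2.2 x.2.2 * x.2.1⋆
              = x.2.1⋆ * (x.2.1 * p x.2.2 x.2.2) * x.2.1⋆ := by simp only [mul_assoc]
            _ = x.2.1⋆ * x.2.1 * x.2.1⋆ := by rw [h3]
            _ = x.2.1⋆ := sms _
        rw [key]
        rfl
      rw [e2]
      have := starClosed x hx
      exact ⟨this, this⟩
  · -- uniqueness
    intro x y hx hy hA hB
    have hx' : p x.1 x.1 * x.2.1 * p x.2.2 x.2.2 = x.2.1 := hx
    have hy' : p y.1 y.1 * y.2.1 * p y.2.2 y.2.2 = y.2.1 := hy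
    have hA1 : p x.1 x.1 * x.2.1 * p x.2.2 x.2.2
        = x.2.1 * p x.2.2 y.1 * y.2.1 * p y.2.2 x.1 * x.2.1 := hA.1
    have hB1 : p y.1 y.1 * y.2.1 * p y.2.2 y.2.2
        = y.2.1 * p y.2.2 x.1 * x.2.1 * p x.2.2 y.1 * y.2.1 := hB.1
    have ht : x.2.1 * p x.2.2 y.1 * y.2.1 * p y.2.2 x.1 * x.2.1 = x.2.1 := hA1.symm.trans hx'
    have hs : y.2.1 * p y.2.2 x.1 * x.2.1 * p x.2.2 y.1 * y.2.1 = y.2.1 := hB1.symm.trans hy'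
    have c1 : x.2.1 * (p x.2.2 y.1 * y.2.1 * p y.2.2 x.1) * x.2.1 = x.2.1 := by
      calc x.2.1 * (p x.2.2 y.1 * y.2.1 * p y.2.2 x.1) * x.2.1
          = x.2.1 * p x.2.2 y.1 * y.2.1 * p y.2.2 x.1 * x.2.1 := by simp only [mul_assoc]
        _ = x.2.1 := ht
    have c2 : (p x.2.2 y.1 * y.2.1 * p y.2.2 x.1) * x.2.1
        * (p x.2.2 y.1 * y.2.1 * p y.2.2 x.1) = p x.2.2 y.1 * y.2.1 * p y.2.2 x.1 := by
      calc (p x.2.2 y.1 * y.2.1 * p y.2.2 x.1) * x.2.1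
            * (p x.2.2 y.1 * y.2.1 * p y.2.2 x.1)
          = p x.2.2 y.1 * (y.2.1 * p y.2.2 x.1 * x.2.1 * p x.2.2 y.1 * y.2.1)
            * p y.2.2 x.1 := by simp only [mul_assoc]
        _ = p x.2.2 y.1 * y.2.1 * p y.2.2 x.1 := by rw [hs] <;> simp only [mul_assoc]
    have g2 : p x.2.2 y.1 * y.2.1 * p y.2.2 x.1 = x.2.1⋆ :=
      star_unique x.2.1 _ c1 c2
    have d1 : y.2.1 * (p y.2.2 x.1 * x.2.1 * p x.2.2 y.1) * y.2.1 = y.2.1 := by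
      calc y.2.1 * (p y.2.2 x.1 * x.2.1 * p x.2.2 y.1) * y.2.1
          = y.2.1 * p y.2.2 x.1 * x.2.1 * p x.2.2 y.1 * y.2.1 := by simp only [mul_assoc]
        _ = y.2.1 := hs
    have d2 : (p y.2.2 x.1 * x.2.1 * p x.2.2 y.1) * y.2.1
        * (p y.2.2 x.1 * x.2.1 * p x.2.2 y.1) = p y.2.2 x.1 * x.2.1 * p x.2.2 y.1 := by
      calc (p y.2.2 x.1 * x.2.1 * p x.2.2 y.1) * y.2.1
            * (p y.2.2 x.1 * x.2.1 * p x.2.2 y.1)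
          = p y.2.2 x.1 * (x.2.1 * p x.2.2 y.1 * y.2.1 * p y.2.2 x.1 * x.2.1)
            * p x.2.2 y.1 := by simp only [mul_assoc]
        _ = p y.2.2 x.1 * x.2.1 * p x.2.2 y.1 := by rw [ht] <;> simp only [mul_assoc]
    have hb : p y.2.2 x.1 * x.2.1 * p x.2.2 y.1 = y.2.1⋆ :=
      star_unique y.2.1 _ d1 d2
    have g1 : p y.1 x.2.2 * x.2.1⋆ * p x.1 y.2.2 = y.2.1 := by
      have h := congrArg InverseSemigroup.star hb
      rw [sstar, IMProof.star_mul', IMProof.star_mul', hp.star_eq x.2.2 y.1, hp.star_eq y.2.2 x.1] at h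
      rw [← h]
      simp only [mul_assoc]
    exact ⟨g1, g2⟩
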